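/- (Equivalence of the two base-extension semantics for IPL) For every base B and every IPL formula θ: ⊩_B θ (Sandqvist's support) holds if and only if ⊩*_B θ (the modified support) holds. -/
import Mathlib


/-- Formulas of intuitionistic propositional logic over a denumerable
set of atoms (here: `ℕ`). -/
inductive IPLForm : Type where
  | atom : ℕ → IPLForm
  | and : IPLForm → IPLForm → IPLForm
  | or : IPLForm → IPLForm → IPLForm
  | imp : IPLForm → IPLForm → IPLForm
  | bot : IPLForm
deriving DecidableEq

/-- A (second-level) atomic rule `(Q₁ ▷ q₁, …, Qₙ ▷ qₙ) ⇒ q`;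
an axiom `⇒ q` is the case `prems = []`. -/
structure IPLRule : Type where
  prems : List (Finset ℕ × ℕ)
  concl : ℕ

/-- A base is a set of atomic rules. -/
abbrev IPLBase := Set IPLRule

/-- Derivability in a base `B`: `S ⊢_B q`. -/
inductive IPLDer (B : IPLBase) : Finset ℕ → ℕ → Prop where
  | ref {S : Finset ℕ} {q : ℕ} : q ∈ S → IPLDer B S q
  | app {S : Finset ℕ} {r : IPLRule} :
      r ∈ B → (∀ pr ∈ r.prems, IPLDer B (S ∪ pr.1) pr.2) →
      IPLDer B S r.concl

/-- Sandqvist's support relation `⊩_B φ`. -/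
def Supp : IPLForm → IPLBase → Prop
  | .atom p, B => IPLDer B ∅ p
  | .and φ ψ, B => Supp φ B ∧ Supp ψ B
  | .or φ ψ, B => ∀ C : IPLBase, B ⊆ C → ∀ p : ℕ,
      (∀ D : IPLBase, C ⊆ D → Supp φ D → IPLDer D ∅ p) →
      (∀ D : IPLBase, C ⊆ D → Supp ψ D → IPLDer D ∅ p) →
      IPLDer C ∅ p
  | .imp φ ψ, B => ∀ C : IPLBase, B ⊆ C → Supp φ C → Supp ψ C
  | .bot, B => ∀ p : ℕ, IPLDer B ∅ p

/-- Support of a formula relative to a context (finite set of formulas):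
`Γ ⊩_B φ`. -/
def SuppCtx (Γ : Finset IPLForm) (B : IPLBase) (φ : IPLForm) : Prop :=
  ∀ C : IPLBase, B ⊆ C → (∀ ψ ∈ Γ, Supp ψ C) → Supp φ C

/-- The modified support relation `⊩*_B φ`, in which the clause for `∧`
takes the form of the generalized elimination rule. -/
def Supp' : IPLForm → IPLBase → Prop
  | .atom p, B => IPLDer B ∅ p
  | .and φ ψ, B => ∀ C : IPLBase, B ⊆ C → ∀ p : ℕ,
      (∀ D : IPLBase, C ⊆ D → Supp' φ D → Supp' ψ D → IPLDer D ∅ p) →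
      IPLDer C ∅ p
  | .or φ ψ, B => ∀ C : IPLBase, B ⊆ C → ∀ p : ℕ,
      (∀ D : IPLBase, C ⊆ D → Supp' φ D → IPLDer D ∅ p) →
      (∀ D : IPLBase, C ⊆ D → Supp' ψ D → IPLDer D ∅ p) →
      IPLDer C ∅ p
  | .imp φ ψ, B => ∀ C : IPLBase, B ⊆ C → Supp' φ C → Supp' ψ C
  | .bot, B => ∀ p : ℕ, IPLDer B ∅ p

/-- Support relative to a context for the modified semantics: `Γ ⊩*_B φ`. -/
def SuppCtx' (Γ : Finset IPLForm) (B : IPLBase) (φ : IPLForm) : Prop :=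
  ∀ C : IPLBase, B ⊆ C → (∀ ψ ∈ Γ, Supp' ψ C) → Supp' φ C

/-- Gentzen's natural deduction system NJ for IPL, with finite sets as
contexts: `Γ ⊢ φ`. -/
inductive NJ : Finset IPLForm → IPLForm → Prop where
  | ax {Γ : Finset IPLForm} {φ : IPLForm} : φ ∈ Γ → NJ Γ φ
  | andI {Γ φ ψ} : NJ Γ φ → NJ Γ ψ → NJ Γ (.and φ ψ)
  | andE1 {Γ φ ψ} : NJ Γ (.and φ ψ) → NJ Γ φ
  | andE2 {Γ φ ψ} : NJ Γ (.and φ ψ) → NJ Γ ψ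
  | orI1 {Γ φ ψ} : NJ Γ φ → NJ Γ (.or φ ψ)
  | orI2 {Γ φ ψ} : NJ Γ ψ → NJ Γ (.or φ ψ)
  | orE {Γ φ ψ χ} : NJ Γ (.or φ ψ) → NJ (insert φ Γ) χ → NJ (insert ψ Γ) χ → NJ Γ χ
  | impI {Γ φ ψ} : NJ (insert φ Γ) ψ → NJ Γ (.imp φ ψ)
  | impE {Γ φ ψ} : NJ Γ (.imp φ ψ) → NJ Γ φ → NJ Γ ψ
  | botE {Γ φ} : NJ Γ .bot → NJ Γ φ

lemma ipl_der_mono {B C : IPLBase} (h : B ⊆ C) {S : Finset ℕ} {q : ℕ}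
    (d : IPLDer B S q) : IPLDer C S q := by
  induction d with
  | ref hq => exact .ref hq
  | app hr _ ih => exact .app (h hr) ih

lemma ipl_supp_mono : ∀ (θ : IPLForm) {B C : IPLBase}, B ⊆ C → Supp θ B → Supp θ C
  | .atom _, _, _, h, hs => ipl_der_mono h hs
  | .and φ ψ, _, _, h, hs => ⟨ipl_supp_mono φ h hs.1, ipl_supp_mono ψ h hs.2⟩
  | .or _ _, _, _, h, hs => fun D hD => hs D (h.trans hD)
  | .imp _ _, _, _, h, hs => fun D hD => hs D (h.trans hD)
  | .bot, _, _, h, hs => fun p => ipl_der_mono h (hs p)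

/-- Stability: support is closed under the generalized-elimination closure. -/
lemma ipl_supp_stable : ∀ (θ : IPLForm) (B : IPLBase),
    (∀ C : IPLBase, B ⊆ C → ∀ p : ℕ,
      (∀ D : IPLBase, C ⊆ D → Supp θ D → IPLDer D ∅ p) → IPLDer C ∅ p) →
    Supp θ B
  | .atom q, B, h =>
      h B subset_rfl q (fun _ _ hs => hs)
  | .and φ ψ, B, h =>
      ⟨ipl_supp_stable φ B (fun C hC p hp =>
          h C hC p (fun D hD hs => hp D hD hs.1)),
       ipl_supp_stable ψ B (fun C hC p hp =>
          h C hC p (fun D hD hs => hp D hD hs.2))⟩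
  | .or φ ψ, B, h => fun C hC p hφ hψ =>
      h C hC p (fun D hD hs =>
        hs D subset_rfl p
          (fun E hE he => hφ E (hD.trans hE) he)
          (fun E hE he => hψ E (hD.trans hE) he))
  | .imp φ ψ, B, h => fun C hC hφ =>
      ipl_supp_stable ψ C (fun C' hC' p hp =>
        h C' (hC.trans hC') p (fun D hD hs =>
          hp D hD (hs D subset_rfl (ipl_supp_mono φ (hC'.trans hD) hφ))))
  | .bot, B, h => fun p =>
      h B subset_rfl p (fun D _ hs => hs p)

/-- (Equivalence of the two base-extension semantics for IPL)
`⊩_B θ` (Sandqvist's support) iff `⊩*_B θ` (modified support). -/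
theorem ipl_supports_equivalent (B : IPLBase) (θ : IPLForm) :
    Supp θ B ↔ Supp' θ B := by
  induction θ generalizing B with
  | atom p => exact Iff.rfl
  | bot => exact Iff.rfl
  | and φ ψ ihφ ihψ =>
    constructor
    · intro hs C hC p hp
      exact hp C subset_rfl
        ((ihφ C).1 (ipl_supp_mono φ hC hs.1))
        ((ihψ C).1 (ipl_supp_mono ψ hC hs.2))
    · intro hs
      have hφ : Supp φ B := ipl_supp_stable φ B (fun C hC p hp =>
        hs C hC p (fun D hD h1 _ => hp D hD ((ihφ D).2 h1)))
      have hψ : Supp ψ B := ipl_supp_stable ψ B (fun C hC p hp =>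
        hs C hC p (fun D hD _ h2 => hp D hD ((ihψ D).2 h2)))
      exact ⟨hφ, hψ⟩
  | or φ ψ ihφ ihψ =>
    constructor
    · intro hs C hC p hφ hψ
      exact hs C hC p (fun D hD h1 => hφ D hD ((ihφ D).1 h1))
        (fun D hD h2 => hψ D hD ((ihψ D).1 h2))
    · intro hs C hC p hφ hψ
      exact hs C hC p (fun D hD h1 => hφ D hD ((ihφ D).2 h1))
        (fun D hD h2 => hψ D hD ((ihψ D).2 h2))
  | imp φ ψ ihφ ihψ =>
    constructor
    · intro hs C hC h1
      exact (ihψ C).1 (hs C hC ((ihφ C).2 h1))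
    · intro hs C hC h1
      exact (ihψ C).2 (hs C hC ((ihφ C).1 h1))
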